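/- arXiv:2409.02747 — 2 statements merged into one kernel-verified Lean document; each statement's English description precedes it below -/
import Mathlib

section
/- For a Count-Min-Sketch with width w whose hash functions are drawn uniformly at random from a pairwise independent family, for any fixed index i and any row j, the expected overcount satisfies E[C(j,h_j(i)) − v_i] ≤ ‖v‖₁ / w. -/
open Finset

theorem sum_mul_sum_filter_comm {Ω ι R : Type*} [Fintype Ω] [CommSemiring R]
    (s : Finset ι) (μ : Ω → R) (v : ι → R) (P : Ω → ι → Prop) [∀ ω i, Decidable (P ω i)] :
    ∑ ω, μ ω * ∑ i ∈ s.filter (P ω), v i = ∑ i ∈ s, v i * ∑ ω ∈ univ.filter (P · i), μ ω := by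
  simp only [mul_sum, sum_filter, mul_ite, mul_zero]
  rw [sum_comm]
  exact sum_congr rfl fun _ _ => sum_congr rfl fun _ _ => by rw [mul_comm]

theorem cms_expected_overcount_general {Ω I B : Type*} [Fintype Ω] [Fintype I] [DecidableEq I]
    [DecidableEq B]
    (μ : Ω → ℝ)
    (H : Ω → I → B) (v : I → ℝ) (hv : ∀ i, 0 ≤ v i)
    (w : ℕ) (i : I)
    (hpair : ∀ i', i' ≠ i →
      ∑ ω ∈ Finset.univ.filter (fun ω => H ω i' = H ω i), μ ω ≤ 1 / w) :
    ∑ ω, μ ω * (∑ i' ∈ Finset.univ.filter (fun i' => i' ≠ i ∧ H ω i' = H ω i), v i')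
      ≤ (∑ i', v i') / w := by
  have collision_le : ∀ i',
      ∑ ω ∈ univ.filter (fun ω => i' ≠ i ∧ H ω i' = H ω i), μ ω ≤ 1 / w := by
    intro i'
    by_cases hi' : i' = i
    · simp [hi']
    · simpa [hi'] using hpair i' hi'
  calc _ = ∑ i', v i' * ∑ ω ∈ univ.filter (fun ω => i' ≠ i ∧ H ω i' = H ω i), μ ω :=
        sum_mul_sum_filter_comm _ _ _ _
    _ ≤ ∑ i', v i' * (1 / w) :=
        sum_le_sum fun i' _ => mul_le_mul_of_nonneg_left (collision_le i') (hv i')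
    _ = (∑ i', v i') / w := by rw [← sum_mul, mul_one_div]

/-- For a CMS whose hash functions come from a pairwise independent family
(`Pr[h_j(i') = h_j(i)] ≤ 1/w` for `i' ≠ i`), the expected overcount of the row
estimate satisfies `E[C(j, h_j(i)) - v_i] ≤ ‖v‖₁ / w`. The randomness is modeled
by a finite probability space `(Ω, μ)` over which the hash function `H` is drawn. -/
theorem cms_expected_overcount {Ω I B : Type*} [Fintype Ω] [Fintype I] [DecidableEq I]
    [DecidableEq B]
    (μ : Ω → ℝ) (hμ0 : ∀ ω, 0 ≤ μ ω) (hμ1 : ∑ ω, μ ω = 1)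
    (H : Ω → I → B) (v : I → ℝ) (hv : ∀ i, 0 ≤ v i)
    (w : ℕ) (hw : 0 < w) (i : I)
    (hpair : ∀ i', i' ≠ i →
      ∑ ω ∈ Finset.univ.filter (fun ω => H ω i' = H ω i), μ ω ≤ 1 / w) :
    ∑ ω, μ ω * (∑ i' ∈ Finset.univ.filter (fun i' => i' ≠ i ∧ H ω i' = H ω i), v i')
      ≤ (∑ i', v i') / w :=
  cms_expected_overcount_general μ H v hv w i hpair
end

section
/- Let p₁ ≠ p₂ be distributions on a finite set E with L_𝒳(p₁,p₂) ≥ μ₀ > 0, and let p̂₁, p̂₂ be empirical estimates from n₁, n₂ samples with min(n₁,n₂) ≥ 8 log(4|𝒳|/δ)/μ₀². Suppose |p̂_i(X) − p_i(X)| ≤ √(log(4|𝒳|/δ)/(2 n_i)) for each X ∈ 𝒳 and i ∈ {1,2}. Then L_𝒳(p̂₁, p̂₂) ≥ √(2 log(4|𝒳|/δ)/min(n₁,n₂)). -/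
noncomputable def langMetric {E : Type*} [DecidableEq E]
    (𝒳 : Finset (Finset E)) (h𝒳 : 𝒳.Nonempty) (p p' : E → ℝ) : ℝ :=
  𝒳.sup' h𝒳 (fun X => |∑ x ∈ X, p x - ∑ x ∈ X, p' x|)

/-!
`L_𝒳` is a pseudometric, and the concentration hypotheses say that each estimate `qᵢ` lies
within `r = √(log(4|𝒳|/δ) / (2 min(n₁, n₂)))` of `pᵢ` in it. By the triangle inequality
`L_𝒳(q₁, q₂) ≥ μ₀ - 2r`, and the sample-size condition says exactly that `2r ≤ μ₀ / 2`, so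
`μ₀ - 2r ≥ 2r = √(2 log(4|𝒳|/δ) / min(n₁, n₂))`.
-/
section langMetric

variable {E : Type*} [DecidableEq E] {𝒳 : Finset (Finset E)} {h𝒳 : 𝒳.Nonempty}

theorem abs_sum_sub_sum_le_langMetric {X : Finset E} (hX : X ∈ 𝒳) (p p' : E → ℝ) :
    |∑ x ∈ X, p x - ∑ x ∈ X, p' x| ≤ langMetric 𝒳 h𝒳 p p' :=
  Finset.le_sup' (fun X => |∑ x ∈ X, p x - ∑ x ∈ X, p' x|) hX

theorem langMetric_le_iff {p p' : E → ℝ} {c : ℝ} :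
    langMetric 𝒳 h𝒳 p p' ≤ c ↔ ∀ X ∈ 𝒳, |∑ x ∈ X, p x - ∑ x ∈ X, p' x| ≤ c :=
  Finset.sup'_le_iff h𝒳 _

theorem langMetric_comm (p p' : E → ℝ) : langMetric 𝒳 h𝒳 p p' = langMetric 𝒳 h𝒳 p' p :=
  Finset.sup'_congr h𝒳 rfl fun _ _ => abs_sub_comm _ _

theorem langMetric_triangle (p q r : E → ℝ) :
    langMetric 𝒳 h𝒳 p r ≤ langMetric 𝒳 h𝒳 p q + langMetric 𝒳 h𝒳 q r :=
  langMetric_le_iff.2 fun _ hX => (abs_sub_le _ _ _).trans <|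
    add_le_add (abs_sum_sub_sum_le_langMetric hX p q) (abs_sum_sub_sum_le_langMetric hX q r)

end langMetric

theorem Real.sqrt_div_le_sqrt_div_of_le (a : ℝ) {m n : ℝ} (hm : 0 < m) (hmn : m ≤ n) :
    √(a / n) ≤ √(a / m) := by
  rw [Real.sqrt_div' a (hm.le.trans hmn), Real.sqrt_div' a hm.le]
  exact div_le_div_of_nonneg_left (Real.sqrt_nonneg a) (Real.sqrt_pos.2 hm)
    (Real.sqrt_le_sqrt hmn)

theorem Real.sqrt_two_mul_div (a m : ℝ) : √(2 * a / m) = 2 * √(a / (2 * m)) := by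
  rw [show 2 * a / m = 2 ^ 2 * (a / (2 * m)) by field_simp,
    Real.sqrt_mul (by norm_num), Real.sqrt_sq (by norm_num)]

theorem langMetric_lower_distinct_dist_general {E : Type*} [DecidableEq E]
    (𝒳 : Finset (Finset E)) (h𝒳 : 𝒳.Nonempty)
    (δ μ₀ : ℝ) (hμ₀ : 0 < μ₀)
    (p₁ p₂ q₁ q₂ : E → ℝ)
    (hsep : μ₀ ≤ langMetric 𝒳 h𝒳 p₁ p₂)
    (n₁ n₂ : ℕ) (hn₁ : 0 < n₁) (hn₂ : 0 < n₂)
    (hmin : 8 * Real.log (4 * 𝒳.card / δ) / μ₀ ^ 2 ≤ min (n₁ : ℝ) (n₂ : ℝ))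
    (h₁ : ∀ X ∈ 𝒳, |∑ x ∈ X, q₁ x - ∑ x ∈ X, p₁ x| ≤
      Real.sqrt (Real.log (4 * 𝒳.card / δ) / (2 * n₁)))
    (h₂ : ∀ X ∈ 𝒳, |∑ x ∈ X, q₂ x - ∑ x ∈ X, p₂ x| ≤
      Real.sqrt (Real.log (4 * 𝒳.card / δ) / (2 * n₂))) :
    Real.sqrt (2 * Real.log (4 * 𝒳.card / δ) / min (n₁ : ℝ) (n₂ : ℝ)) ≤
      langMetric 𝒳 h𝒳 q₁ q₂ := by
  set L := Real.log (4 * 𝒳.card / δ)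
  set m := min (n₁ : ℝ) (n₂ : ℝ)
  have hm : 0 < m := lt_min (by exact_mod_cast hn₁) (by exact_mod_cast hn₂)
  have hradius (n : ℕ) (hn : m ≤ n) : √(L / (2 * n)) ≤ √(L / (2 * m)) :=
    Real.sqrt_div_le_sqrt_div_of_le L (by positivity) (by linarith)
  have hsample : √(2 * L / m) ≤ μ₀ / 2 := by
    refine Real.sqrt_le_iff.2 ⟨by positivity, ?_⟩
    rw [div_le_iff₀ hm]
    nlinarith [(div_le_iff₀ (by positivity : (0 : ℝ) < μ₀ ^ 2)).1 hmin]
  have hq₁ : langMetric 𝒳 h𝒳 q₁ p₁ ≤ √(L / (2 * m)) :=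
    langMetric_le_iff.2 fun X hX => (h₁ X hX).trans (hradius n₁ (min_le_left _ _))
  have hq₂ : langMetric 𝒳 h𝒳 q₂ p₂ ≤ √(L / (2 * m)) :=
    langMetric_le_iff.2 fun X hX => (h₂ X hX).trans (hradius n₂ (min_le_right _ _))
  have hreverse : langMetric 𝒳 h𝒳 p₁ p₂ ≤
      langMetric 𝒳 h𝒳 q₁ p₁ + langMetric 𝒳 h𝒳 q₁ q₂ + langMetric 𝒳 h𝒳 q₂ p₂ := by
    rw [langMetric_comm q₁ p₁]
    exact (langMetric_triangle p₁ q₂ p₂).trans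
      (add_le_add_left (langMetric_triangle p₁ q₁ q₂) _)
  linarith [Real.sqrt_two_mul_div L m]

/-- Lower bound on the language metric between empirical estimates of two distinct
distributions with `L_𝒳(p₁,p₂) ≥ μ₀`, given enough samples and the Hoeffding-type
concentration event. -/
theorem langMetric_lower_distinct_dist {E : Type*} [Fintype E] [DecidableEq E]
    (𝒳 : Finset (Finset E)) (h𝒳 : 𝒳.Nonempty)
    (δ μ₀ : ℝ) (hδ0 : 0 < δ) (hδ1 : δ < 1) (hμ₀ : 0 < μ₀)
    (p₁ p₂ q₁ q₂ : E → ℝ)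
    (hp₁ : (∀ x, 0 ≤ p₁ x) ∧ ∑ x, p₁ x = 1)
    (hp₂ : (∀ x, 0 ≤ p₂ x) ∧ ∑ x, p₂ x = 1)
    (hne : p₁ ≠ p₂)
    (hsep : μ₀ ≤ langMetric 𝒳 h𝒳 p₁ p₂)
    (n₁ n₂ : ℕ) (hn₁ : 0 < n₁) (hn₂ : 0 < n₂)
    (hmin : 8 * Real.log (4 * 𝒳.card / δ) / μ₀ ^ 2 ≤ min (n₁ : ℝ) (n₂ : ℝ))
    (h₁ : ∀ X ∈ 𝒳, |∑ x ∈ X, q₁ x - ∑ x ∈ X, p₁ x| ≤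
      Real.sqrt (Real.log (4 * 𝒳.card / δ) / (2 * n₁)))
    (h₂ : ∀ X ∈ 𝒳, |∑ x ∈ X, q₂ x - ∑ x ∈ X, p₂ x| ≤
      Real.sqrt (Real.log (4 * 𝒳.card / δ) / (2 * n₂))) :
    Real.sqrt (2 * Real.log (4 * 𝒳.card / δ) / min (n₁ : ℝ) (n₂ : ℝ)) ≤
      langMetric 𝒳 h𝒳 q₁ q₂ :=
  langMetric_lower_distinct_dist_general 𝒳 h𝒳 δ μ₀ hμ₀ p₁ p₂ q₁ q₂ hsep n₁ n₂ hn₁ hn₂ hmin h₁ h₂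
end
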